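/- Let a, b : ℝ → ℂ be smooth functions such that a(θ + 2π) − a(θ) = 2πi·m and b(θ + 2π) − b(θ) = 2πi·n for all θ, where m, n ∈ ℤ. Then for all integers j, k, B(a + 2πi·j, b + 2πi·k) = B(a, b); that is, the value of Beilinson's monodromy pairing does not depend on the choice of branches of the logarithms. -/

import Mathlib

noncomputable section

/-- Beilinson's monodromy pairing
`B(a,b) = exp{(1/2πi)(∫₀^{2π} a(θ) b'(θ) dθ − 2πi·m_a·b(0))}`,
for logarithm lifts `a`, `b`; here `2πi·m_a = a(2π) − a(0)`. -/
def Bpair (a b : ℝ → ℂ) : ℂ :=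
  Complex.exp ((2 * (Real.pi : ℂ) * Complex.I)⁻¹ *
    ((∫ θ in (0 : ℝ)..(2 * Real.pi), a θ * deriv b θ) - (a (2 * Real.pi) - a 0) * b 0))

theorem stmt_5 (a b : ℝ → ℂ) (m n : ℤ) (ha : ContDiff ℝ (⊤ : ℕ∞) a) (hb : ContDiff ℝ (⊤ : ℕ∞) b)
    (hma : ∀ θ, a (θ + 2 * Real.pi) = a θ + 2 * (Real.pi : ℂ) * Complex.I * (m : ℂ))
    (hnb : ∀ θ, b (θ + 2 * Real.pi) = b θ + 2 * (Real.pi : ℂ) * Complex.I * (n : ℂ))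
    (j k : ℤ) :
    Bpair (fun θ => a θ + 2 * (Real.pi : ℂ) * Complex.I * (j : ℂ))
        (fun θ => b θ + 2 * (Real.pi : ℂ) * Complex.I * (k : ℂ))
      = Bpair a b := by
  have hπ : ((2:ℂ) * Real.pi * Complex.I) ≠ 0 := by
    simp [Real.pi_ne_zero, Complex.I_ne_zero, Complex.ofReal_ne_zero]
  set C : ℂ := 2 * (Real.pi : ℂ) * Complex.I with hC
  have hb2 : b (2 * Real.pi) - b 0 = C * n := by
    have h := hnb 0; rw [zero_add] at h; rw [h]; ring
  have ha2 : a (2 * Real.pi) - a 0 = C * m := by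
    have h := hma 0; rw [zero_add] at h; rw [h]; ring
  have hcont_a : Continuous a := ha.continuous
  have hcont_db : Continuous (deriv b) := hb.continuous_deriv (by simp)
  have hint1 : IntervalIntegrable (fun θ => a θ * deriv b θ) MeasureTheory.volume 0 (2*Real.pi) :=
    (hcont_a.mul hcont_db).intervalIntegrable _ _
  have hint2 : IntervalIntegrable (fun θ => C * (j:ℂ) * deriv b θ) MeasureTheory.volume 0 (2*Real.pi) :=
    (continuous_const.mul hcont_db).intervalIntegrable _ _
  have hFTC : ∫ θ in (0:ℝ)..(2*Real.pi), deriv b θ = b (2*Real.pi) - b 0 :=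
    intervalIntegral.integral_deriv_eq_sub (fun x _ => hb.differentiable (by simp) x)
      (hcont_db.intervalIntegrable _ _)
  have hsplit : (∫ θ in (0:ℝ)..(2*Real.pi), (a θ + C * j) * deriv b θ)
      = (∫ θ in (0:ℝ)..(2*Real.pi), a θ * deriv b θ) + C * j * (b (2*Real.pi) - b 0) := by
    rw [← hFTC, ← intervalIntegral.integral_const_mul, ← intervalIntegral.integral_add hint1 hint2]
    congr 1; funext θ; ring
  unfold Bpair
  simp only [deriv_add_const]
  rw [hsplit, hb2]
  have hbd : (a (2*Real.pi) + C * j) - (a 0 + C * j) = C * m := by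
    rw [← ha2]; ring
  rw [hbd, ha2]
  have key : C⁻¹ * (((∫ θ in (0:ℝ)..(2*Real.pi), a θ * deriv b θ) + C * j * (C * n))
        - C * m * (b 0 + C * k))
      = C⁻¹ * ((∫ θ in (0:ℝ)..(2*Real.pi), a θ * deriv b θ) - C * m * b 0)
        + ((j*n - m*k : ℤ) : ℂ) * (2*(Real.pi:ℂ)*Complex.I) := by
    rw [hC]; field_simp; push_cast; ring
  rw [key, Complex.exp_add, Complex.exp_int_mul_two_pi_mul_I, mul_one]

end
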